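/- arXiv:2207.11015 — 7 statements merged into one kernel-verified Lean document; each statement's English description precedes it below -/
import Mathlib

section
/- Let q ≥ 2 and n ≥ 1 be integers, ξ = e^{2πi/q}, ω = e^{πi/q}, and η = e^{πi/(2q)}. Then for every u ∈ ℤ_q^n, Σ_{x ∈ ℤ_q^n} ξ^{⟨û,x̂⟩} ω^{Σ_j x̂_j} = η^{n(q−1) − 2 Σ_j û_j} / Π_{j=1}^n sin((2û_j + 1)π/(2q)). -/
open Finset

/-- `ω = e^{πi/q}`, a primitive `2q`-th root of unity. -/
noncomputable def omg (q : ℕ) : ℂ := Complex.exp ((Real.pi : ℂ) * Complex.I / q)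

/-- `ξ = e^{2πi/q}`, a primitive `q`-th root of unity. -/
noncomputable def xiq (q : ℕ) : ℂ := Complex.exp (2 * (Real.pi : ℂ) * Complex.I / q)

/-- The `2q`-nega-Hadamard transform of `f : ℤ_q^n → ℤ_{2q}` at `u ∈ ℤ_q^n`:
`N_f(u) = q^{-n/2} Σ_x ω^{f(x)} ξ^{⟨x̂,û⟩} ω^{Σ_i x̂_i}`. -/
noncomputable def NHT (q n : ℕ) [NeZero q] (f : (Fin n → ZMod q) → ZMod (2 * q))
    (u : Fin n → ZMod q) : ℂ :=
  (Real.sqrt ((q : ℝ) ^ n) : ℂ)⁻¹ *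
    ∑ x : Fin n → ZMod q,
      omg q ^ (f x).val * xiq q ^ (∑ i, (x i).val * (u i).val) * omg q ^ (∑ i, (x i).val)

/-- The `2q`-nega-crosscorrelation of `f, g : ℤ_q^m → ℤ_{2q}` at `u`:
`C_{f,g}(u) = Σ_x ω^{f(x) − g(x+u)} (−1)^{n_q(x̂,û)}`. -/
noncomputable def negaCC (q m : ℕ) [NeZero q]
    (f g : (Fin m → ZMod q) → ZMod (2 * q)) (u : Fin m → ZMod q) : ℂ :=
  ∑ x : Fin m → ZMod q,
    omg q ^ (f x - g (x + u)).val *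
      (-1 : ℂ) ^ (Finset.univ.filter (fun i => q ≤ (x i).val + (u i).val)).card

/-- `η = e^{πi/(2q)}`, a primitive `4q`-th root of unity. -/
noncomputable def etaq (q : ℕ) : ℂ := Complex.exp ((Real.pi : ℂ) * Complex.I / (2 * q))

/-!
Everything is a power of `η`: `ω = η²` and `ξ = η⁴`, so the summand factors over the coordinates
as `∏ⱼ (w_j²)^{x̂ⱼ}` with `w_j = η^{2ûⱼ+1} = e^{iθⱼ}`, `θⱼ = (2ûⱼ+1)π/(2q)`, and the sum is a
product of geometric sums. Since `w^{2q} = -1` and `w² - 1 = 2i sin θ · w`, each of them equals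
`-2 / (2i sin θ · w) = i w⁻¹ / sin θ = η^{q-1-2v} / sin θ`, using `η^q = i`.
-/

theorem Finset.prod_zpow_eq_zpow_sum₀ {ι G₀ : Type*} [CommGroupWithZero G₀] (s : Finset ι)
    {a : G₀} (ha : a ≠ 0) (f : ι → ℤ) : ∏ i ∈ s, a ^ f i = a ^ ∑ i ∈ s, f i := by
  induction s using Finset.cons_induction with
  | empty => simp
  | cons i s _ ih => rw [prod_cons, sum_cons, zpow_add₀ ha, ih]

open Complex in
theorem cexp_mul_I_sq_sub_one (θ : ℝ) :
    exp (θ * I) ^ 2 - 1 = 2 * I * Real.sin θ * exp (θ * I) := by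
  rw [ofReal_sin, sin, neg_mul, exp_neg]
  field_simp
  ring_nf
  rw [I_sq]
  ring

theorem ZMod.sum_val_eq_sum_range {M : Type*} [AddCommMonoid M] {q : ℕ} [NeZero q] (f : ℕ → M) :
    ∑ x : ZMod q, f x.val = ∑ k ∈ range q, f k := by
  obtain ⟨m, rfl⟩ : ∃ m, q = m + 1 := Nat.exists_eq_succ_of_ne_zero (NeZero.ne q)
  exact Fin.sum_univ_eq_sum_range f (m + 1)

open Complex in
theorem geom_sum_cexp_mul_I_sq {θ : ℝ} (hθ : Real.sin θ ≠ 0) (N : ℕ) :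
    ∑ k ∈ range N, (exp (θ * I) ^ 2) ^ k
      = (exp (θ * I) ^ (2 * N) - 1) / (2 * I * Real.sin θ * exp (θ * I)) := by
  have hne : exp (θ * I) ^ 2 - 1 ≠ 0 := by
    rw [cexp_mul_I_sq_sub_one]
    exact mul_ne_zero (mul_ne_zero (by simp) (by exact_mod_cast hθ)) (exp_ne_zero _)
  rw [geom_sum_eq (sub_ne_zero.mp hne), pow_mul, cexp_mul_I_sq_sub_one]

theorem etaq_ne_zero (q : ℕ) : etaq q ≠ 0 := Complex.exp_ne_zero _

theorem etaq_pow_two (q : ℕ) : etaq q ^ 2 = omg q := by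
  rw [etaq, omg, ← Complex.exp_nat_mul]
  congr 1
  field_simp
  push_cast
  ring

theorem etaq_pow_four (q : ℕ) : etaq q ^ 4 = xiq q := by
  rw [etaq, xiq, ← Complex.exp_nat_mul]
  congr 1
  field_simp
  push_cast
  ring

theorem etaq_pow_self (q : ℕ) [NeZero q] : etaq q ^ q = Complex.I := by
  have hq : (q : ℂ) ≠ 0 := NeZero.ne _
  rw [etaq, ← Complex.exp_nat_mul]
  convert Complex.exp_pi_div_two_mul_I using 2
  field_simp

theorem cexp_mul_I_eq_etaq_pow (q m : ℕ) :
    Complex.exp ((m * Real.pi / (2 * q) : ℝ) * Complex.I) = etaq q ^ m := by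
  rw [etaq, ← Complex.exp_nat_mul]
  congr 1
  push_cast
  ring

theorem sum_range_xiq_pow_mul_omg_pow (q : ℕ) [NeZero q] {v : ℕ} (hv : v < q) :
    ∑ k ∈ range q, xiq q ^ (v * k) * omg q ^ k
      = etaq q ^ ((q : ℤ) - 1 - 2 * v) / (Real.sin ((2 * (v : ℝ) + 1) * Real.pi / (2 * q)) : ℂ) := by
  set θ : ℝ := (2 * (v : ℝ) + 1) * Real.pi / (2 * q)
  have hq : (0 : ℝ) < q := Nat.cast_pos.mpr (Nat.pos_of_neZero q)
  have hsin : Real.sin θ ≠ 0 := by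
    refine (Real.sin_pos_of_pos_of_lt_pi (by positivity) ?_).ne'
    rw [div_lt_iff₀ (by positivity)]
    have hv' : (v : ℝ) + 1 ≤ q := by exact_mod_cast hv
    nlinarith [Real.pi_pos]
  have hw : Complex.exp (θ * Complex.I) = etaq q ^ (2 * v + 1) := by
    rw [← cexp_mul_I_eq_etaq_pow]
    congr 3
    push_cast
    rfl
  have hsummand : ∀ k, xiq q ^ (v * k) * omg q ^ k = (Complex.exp (θ * Complex.I) ^ 2) ^ k := by
    intro k
    rw [hw, ← etaq_pow_four, ← etaq_pow_two]
    ring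
  simp only [hsummand]
  have hexp : (q : ℤ) - 1 - 2 * v = ((q : ℕ) : ℤ) - ((2 * v + 1 : ℕ) : ℤ) := by push_cast; ring
  have hpow : (etaq q ^ (2 * v + 1)) ^ (2 * q) = -1 := by
    rw [← pow_mul, show (2 * v + 1) * (2 * q) = q * (2 * (2 * v + 1)) by ring, pow_mul,
      etaq_pow_self, pow_mul, Complex.I_sq, Odd.neg_one_pow (odd_two_mul_add_one v)]
  rw [geom_sum_cexp_mul_I_sq hsin, hw, hexp, zpow_sub₀ (etaq_ne_zero q), zpow_natCast, zpow_natCast,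
    etaq_pow_self, hpow]
  field_simp
  rw [Complex.I_sq]
  ring

theorem nht_of_zero_general (q n : ℕ) [NeZero q] (u : Fin n → ZMod q) :
    ∑ x : Fin n → ZMod q,
        xiq q ^ (∑ i, (u i).val * (x i).val) * omg q ^ (∑ i, (x i).val)
      = etaq q ^ ((n : ℤ) * ((q : ℤ) - 1) - 2 * ∑ j, ((u j).val : ℤ)) /
          ∏ j, (Real.sin ((2 * ((u j).val : ℝ) + 1) * Real.pi / (2 * q)) : ℂ) := by
  calc _ = ∑ x : Fin n → ZMod q, ∏ i, xiq q ^ ((u i).val * (x i).val) * omg q ^ (x i).val := by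
        simp only [prod_mul_distrib, prod_pow_eq_pow_sum]
    _ = ∏ i, ∑ y : ZMod q, xiq q ^ ((u i).val * y.val) * omg q ^ y.val :=
        (Fintype.prod_sum fun i (y : ZMod q) => xiq q ^ ((u i).val * y.val) * omg q ^ y.val).symm
    _ = ∏ i, etaq q ^ ((q : ℤ) - 1 - 2 * (u i).val) /
          (Real.sin ((2 * ((u i).val : ℝ) + 1) * Real.pi / (2 * q)) : ℂ) := by
        refine prod_congr rfl fun i _ => ?_
        rw [ZMod.sum_val_eq_sum_range fun k => xiq q ^ ((u i).val * k) * omg q ^ k,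
          sum_range_xiq_pow_mul_omg_pow q (ZMod.val_lt _)]
    _ = _ := by
        rw [prod_div_distrib, prod_zpow_eq_zpow_sum₀ _ (etaq_ne_zero q)]
        congr 2
        simp only [sum_sub_distrib, sum_const, card_univ, Fintype.card_fin, ← mul_sum, nsmul_eq_mul]
        ring

/-- For every `u ∈ ℤ_q^n`,
`Σ_{x ∈ ℤ_q^n} ξ^{⟨û,x̂⟩} ω^{Σ_j x̂_j} = η^{n(q−1) − 2Σ_j û_j} / Π_j sin((2û_j+1)π/(2q))`. -/
theorem nht_of_zero (q n : ℕ) [NeZero q] (hq : 2 ≤ q) (hn : 1 ≤ n) (u : Fin n → ZMod q) :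
    ∑ x : Fin n → ZMod q,
        xiq q ^ (∑ i, (u i).val * (x i).val) * omg q ^ (∑ i, (x i).val)
      = etaq q ^ ((n : ℤ) * ((q : ℤ) - 1) - 2 * ∑ j, ((u j).val : ℤ)) /
          ∏ j, (Real.sin ((2 * ((u j).val : ℝ) + 1) * Real.pi / (2 * q)) : ℂ) :=
  nht_of_zero_general q n u
end

section
/- Let q > 2 and n ≥ 1 be integers. For a function f : ℤ_q^n → ℤ_q, define N′_f(u) = q^{−n/2} Σ_{x ∈ ℤ_q^n} ξ^{f(x)} ξ^{⟨x̂,û⟩} ω^{Σ_i x̂_i} for u ∈ ℤ_q^n, where ξ^{f(x)} means ξ raised to the canonical representative of f(x). Then there is no affine function f : ℤ_q^n → ℤ_q, i.e. a function of the form f(x) = ⟨a,x⟩ + b with a ∈ ℤ_q^n and b ∈ ℤ_q (inner product and addition in ℤ_q), such that |N′_f(u)| = 1 for all u ∈ ℤ_q^n. -/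
open Finset

/-- The `q`-ary nega-Hadamard transform `N′_f(u) = q^{−n/2} Σ_x ξ^{f(x)} ξ^{⟨x̂,û⟩} ω^{Σ_i x̂_i}`
of `f : ℤ_q^n → ℤ_q`. -/
noncomputable def NHTq (q n : ℕ) [NeZero q] (f : (Fin n → ZMod q) → ZMod q)
    (u : Fin n → ZMod q) : ℂ :=
  (Real.sqrt ((q : ℝ) ^ n) : ℂ)⁻¹ *
    ∑ x : Fin n → ZMod q,
      xiq q ^ (f x).val * xiq q ^ (∑ i, (x i).val * (u i).val) * omg q ^ (∑ i, (x i).val)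

/-! For affine `f(x) = ⟨a,x⟩ + b` the sum defining `N′_f(u)` factors coordinatewise as
`q^{-n/2} ξ^b ∏ᵢ G(aᵢ + uᵢ)` with `G(c) = Σ_t (ξ^ĉ ω)^t̂`. Since `(ξ^ĉ ω)^q = -1`, this geometric
sum has modulus `1 / |sin((2ĉ+1)π/(2q))|`. Moving one coordinate of `a + u` from `0` to `1` swaps a
factor `|G(0)|` for `|G(1)|`, so `|N′_f| ≡ 1` would force `sin(π/2q) = sin(3π/2q)`, which fails
for `q > 2` because both angles lie in `(0, π/2]`. -/

open Complex

section PowZModVal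

variable {M : Type*} {q : ℕ} {ζ : M}

lemma pow_zmod_val_natCast [Monoid M] (hζ : ζ ^ q = 1) (m : ℕ) :
    ζ ^ (m : ZMod q).val = ζ ^ m := by
  rw [ZMod.val_natCast, ← pow_eq_pow_mod _ hζ]

lemma pow_zmod_val_add [NeZero q] [Monoid M] (hζ : ζ ^ q = 1) (x y : ZMod q) :
    ζ ^ (x + y).val = ζ ^ x.val * ζ ^ y.val := by
  rw [← pow_add, ← pow_zmod_val_natCast hζ (x.val + y.val), Nat.cast_add, ZMod.natCast_zmod_val,
    ZMod.natCast_zmod_val]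

lemma pow_zmod_val_mul [NeZero q] [Monoid M] (hζ : ζ ^ q = 1) (x y : ZMod q) :
    ζ ^ (x * y).val = (ζ ^ x.val) ^ y.val := by
  rw [← pow_mul, ← pow_zmod_val_natCast hζ (x.val * y.val), Nat.cast_mul, ZMod.natCast_zmod_val,
    ZMod.natCast_zmod_val]

lemma pow_zmod_val_sum [NeZero q] [CommMonoid M] (hζ : ζ ^ q = 1) {ι : Type*} (s : Finset ι)
    (f : ι → ZMod q) : ζ ^ (∑ i ∈ s, f i).val = ∏ i ∈ s, ζ ^ (f i).val := by
  rw [prod_pow_eq_pow_sum, ← pow_zmod_val_natCast hζ (∑ i ∈ s, (f i).val), Nat.cast_sum]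
  simp only [ZMod.natCast_zmod_val]

end PowZModVal

lemma sum_zmod_val_eq_sum_range {M : Type*} [AddCommMonoid M] (q : ℕ) [NeZero q] (g : ℕ → M) :
    ∑ t : ZMod q, g t.val = ∑ i ∈ range q, g i := by
  obtain ⟨k, rfl⟩ := Nat.exists_eq_succ_of_ne_zero (NeZero.ne q)
  exact Fin.sum_univ_eq_sum_range g (k + 1)

lemma xiq_pow_self (q : ℕ) [NeZero q] : xiq q ^ q = 1 :=
  (isPrimitiveRoot_exp q (NeZero.ne q)).pow_eq_one

lemma omg_pow_self (q : ℕ) [NeZero q] : omg q ^ q = -1 := by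
  have hq : (q : ℂ) ≠ 0 := Nat.cast_ne_zero.2 (NeZero.ne q)
  rw [omg, ← exp_nat_mul, mul_div_cancel₀ _ hq, exp_pi_mul_I]

lemma xiq_pow_mul_omg (q c : ℕ) :
    xiq q ^ c * omg q = exp (I * ((2 * c + 1) * Real.pi / q : ℝ)) := by
  rw [xiq, omg, ← exp_nat_mul, ← exp_add]
  congr 1
  push_cast
  ring

noncomputable def negaGeomSum (q : ℕ) [NeZero q] (c : ZMod q) : ℂ :=
  ∑ t : ZMod q, (xiq q ^ c.val * omg q) ^ t.val

lemma NHTq_affine (q n : ℕ) [NeZero q] (a : Fin n → ZMod q) (b : ZMod q)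
    (u : Fin n → ZMod q) :
    NHTq q n (fun x => (∑ i, a i * x i) + b) u =
      (Real.sqrt ((q : ℝ) ^ n) : ℂ)⁻¹ * xiq q ^ b.val * ∏ i, negaGeomSum q (a i + u i) := by
  have hξ := xiq_pow_self q
  simp only [NHTq, negaGeomSum, Fintype.prod_sum, mul_sum, mul_assoc]
  refine sum_congr rfl fun x _ => ?_
  rw [pow_zmod_val_add hξ, pow_zmod_val_sum hξ, ← prod_pow_eq_pow_sum, ← prod_pow_eq_pow_sum]
  have hprod : ∏ i, (xiq q ^ (a i + u i).val * omg q) ^ (x i).val =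
      (∏ i, xiq q ^ (a i * x i).val) * (∏ i, xiq q ^ ((x i).val * (u i).val)) *
        ∏ i, omg q ^ (x i).val := by
    rw [← prod_mul_distrib, ← prod_mul_distrib]
    refine prod_congr rfl fun i _ => ?_
    rw [pow_zmod_val_mul hξ, pow_zmod_val_add hξ, mul_comm ((x i).val) ((u i).val), pow_mul]
    ring
  rw [hprod]
  ring

lemma negaGeomSum_eq (q : ℕ) [NeZero q] (c : ZMod q) :
    negaGeomSum q c = -2 / (xiq q ^ c.val * omg q - 1) := by
  set r := xiq q ^ c.val * omg q
  have hr : r ^ q = -1 := by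
    rw [mul_pow, ← pow_mul, mul_comm c.val, pow_mul, xiq_pow_self, one_pow, one_mul, omg_pow_self]
  have hr1 : r ≠ 1 := by
    intro h
    norm_num [h] at hr
  rw [negaGeomSum, sum_zmod_val_eq_sum_range q (r ^ ·), geom_sum_eq hr1, hr]
  norm_num

lemma norm_negaGeomSum (q : ℕ) [NeZero q] (c : ZMod q) :
    ‖negaGeomSum q c‖ = |Real.sin ((2 * c.val + 1) * Real.pi / (2 * q))|⁻¹ := by
  rw [negaGeomSum_eq, xiq_pow_mul_omg, norm_div, norm_exp_I_mul_ofReal_sub_one]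
  simp only [norm_neg, Complex.norm_ofNat, norm_mul, Real.norm_eq_abs, abs_two]
  rw [show (2 * c.val + 1) * Real.pi / q / 2 = (2 * c.val + 1) * Real.pi / (2 * q) by ring]
  field_simp

lemma norm_eq_of_norm_prod_update_eq {ι α R : Type*} [Fintype ι] [DecidableEq ι]
    [NormedCommRing R] [NormMulClass R] (G : α → R) (c : ι → α) (i : ι) (x : α)
    (h : ‖∏ j, G (c j)‖ = ‖∏ j, G (Function.update c i x j)‖) (h0 : ∏ j, G (c j) ≠ 0) :
    ‖G (c i)‖ = ‖G x‖ := by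
  rw [← Function.comp_def G (Function.update c i x), Function.comp_update] at h
  rw [prod_update_of_mem (mem_univ i),
    ← Function.comp_def G c, prod_eq_mul_prod_sdiff_singleton_of_mem (mem_univ i)] at h
  rw [← Function.comp_def G c, prod_eq_mul_prod_sdiff_singleton_of_mem (mem_univ i)] at h0
  simp only [norm_mul, Function.comp_apply] at h
  exact mul_right_cancel₀ (norm_ne_zero_iff.2 (right_ne_zero_of_mul h0)) h

lemma sin_pi_div_pos_and_lt_sin_three_pi_div {q : ℝ} (hq : 3 ≤ q) :
    0 < Real.sin (Real.pi / (2 * q)) ∧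
      Real.sin (Real.pi / (2 * q)) < Real.sin (3 * Real.pi / (2 * q)) := by
  have hq0 : 0 < q := by linarith
  have hπ := Real.pi_pos
  refine ⟨Real.sin_pos_of_pos_of_lt_pi (by positivity) ?_,
    Real.sin_lt_sin_of_lt_of_le_pi_div_two ?_ ?_ ?_⟩
  · rw [div_lt_iff₀ (by positivity)]; nlinarith
  · have : 0 ≤ Real.pi / (2 * q) := by positivity
    linarith
  · rw [div_le_div_iff₀ (by positivity) two_pos]; nlinarith
  · gcongr; linarith

/-- For `q > 2`, no affine function `f(x) = ⟨a,x⟩ + b` from `ℤ_q^n` to `ℤ_q`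
satisfies `|N′_f(u)| = 1` for all `u ∈ ℤ_q^n`. -/
theorem no_affine_q_negabent (q n : ℕ) [NeZero q] (hq : 2 < q) (hn : 1 ≤ n) :
    ¬ ∃ (a : Fin n → ZMod q) (b : ZMod q),
        ∀ u : Fin n → ZMod q,
          ‖NHTq q n (fun x => (∑ i, a i * x i) + b) u‖ = 1 := by
  rintro ⟨a, b, h⟩
  set κ : ℂ := (Real.sqrt ((q : ℝ) ^ n) : ℂ)⁻¹ * xiq q ^ b.val
  have hκ (c : Fin n → ZMod q) : ‖κ‖ * ‖∏ i, negaGeomSum q (c i)‖ = 1 := by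
    rw [← norm_mul]
    simpa only [NHTq_affine, Pi.sub_apply, add_sub_cancel] using h (c - a)
  have hG : ‖negaGeomSum q 0‖ = ‖negaGeomSum q 1‖ :=
    norm_eq_of_norm_prod_update_eq (negaGeomSum q) 0 ⟨0, hn⟩ 1
      (mul_left_cancel₀ (left_ne_zero_of_mul_eq_one (hκ 0)) ((hκ 0).trans (hκ _).symm))
      (norm_ne_zero_iff.1 (right_ne_zero_of_mul_eq_one (hκ 0)))
  have : Fact (1 < q) := ⟨by omega⟩
  rw [norm_negaGeomSum, norm_negaGeomSum, ZMod.val_zero, ZMod.val_one, inv_inj] at hG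
  obtain ⟨hpos, hlt⟩ := sin_pi_div_pos_and_lt_sin_three_pi_div (q := q) (by exact_mod_cast hq)
  norm_num [abs_of_pos hpos, abs_of_pos (hpos.trans hlt)] at hG
  linarith
end

section
/- Let q ≥ 2 and n ≥ 1 be integers and f : ℤ_q^n → ℤ_{2q}. Then for all x ∈ ℤ_q^n, ω^{f(x)} = q^{−n/2} ω^{−Σ_i x̂_i} Σ_{u ∈ ℤ_q^n} N_f(u) ξ^{−⟨û,x̂⟩} (inversion formula for the 2q-nega-Hadamard transform). -/
open Finset

lemma zpow_finset_sum {α : Type*} (a : ℂ) (ha : a ≠ 0) (s : Finset α) (g : α → ℤ) :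
    a ^ (∑ i ∈ s, g i) = ∏ i ∈ s, a ^ g i := by
  induction s using Finset.cons_induction with
  | empty => simp
  | cons i s hi ih => rw [Finset.sum_cons, Finset.prod_cons, zpow_add₀ ha, ih]

lemma sum_zmod_val {q : ℕ} [NeZero q] (h : ℕ → ℂ) :
    ∑ u : ZMod q, h u.val = ∑ i ∈ range q, h i := by
  refine Finset.sum_bij' (fun u _ => u.val) (fun i _ => (i : ZMod q)) ?_ ?_ ?_ ?_ ?_
  · intro u _; exact Finset.mem_range.mpr (ZMod.val_lt u)
  · intro i _; exact Finset.mem_univ _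
  · intro u _; exact ZMod.natCast_rightInverse u
  · intro i hi; exact ZMod.val_cast_of_lt (Finset.mem_range.mp hi)
  · intro u _; rfl

lemma orth {q : ℕ} [NeZero q] (k : ℤ) :
    ∑ u : ZMod q, xiq q ^ (k * u.val) = if (q : ℤ) ∣ k then (q : ℂ) else 0 := by
  have hprim : IsPrimitiveRoot (xiq q) q := Complex.isPrimitiveRoot_exp q (NeZero.ne q)
  have hterm : ∀ u : ZMod q, xiq q ^ (k * (u.val : ℤ)) = (xiq q ^ k) ^ u.val := by
    intro u; rw [zpow_mul, zpow_natCast]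
  rw [Finset.sum_congr rfl (fun u _ => hterm u), sum_zmod_val (fun i => (xiq q ^ k) ^ i)]
  by_cases hdvd : (q : ℤ) ∣ k
  · rw [if_pos hdvd, (hprim.zpow_eq_one_iff_dvd k).mpr hdvd]
    simp
  · rw [if_neg hdvd]
    have hne1 : xiq q ^ k ≠ 1 := fun h => hdvd ((hprim.zpow_eq_one_iff_dvd k).mp h)
    rw [geom_sum_eq hne1, ← zpow_natCast (xiq q ^ k) q, ← zpow_mul, mul_comm,
      zpow_mul, zpow_natCast, hprim.pow_eq_one, one_zpow, sub_self, zero_div]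

lemma orth' {q : ℕ} [NeZero q] (a b : ZMod q) :
    ∑ u : ZMod q, xiq q ^ (((a.val : ℤ) - b.val) * u.val) = if a = b then (q : ℂ) else 0 := by
  have key : ((q : ℤ) ∣ ((a.val : ℤ) - b.val)) ↔ a = b := by
    rw [← ZMod.intCast_zmod_eq_zero_iff_dvd]
    push_cast
    simp [ZMod.natCast_val, ZMod.cast_id, sub_eq_zero]
  rw [orth, if_congr key rfl rfl]

/-- Inversion formula for the `2q`-nega-Hadamard transform:
`ω^{f(x)} = q^{−n/2} ω^{−Σ_i x̂_i} Σ_u N_f(u) ξ^{−⟨û,x̂⟩}`. -/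
theorem nht_inversion (q n : ℕ) [NeZero q] (hq : 2 ≤ q) (hn : 1 ≤ n)
    (f : (Fin n → ZMod q) → ZMod (2 * q)) (x : Fin n → ZMod q) :
    (omg q ^ (f x).val : ℂ)
      = (Real.sqrt ((q : ℝ) ^ n) : ℂ)⁻¹ * omg q ^ (-(∑ i, ((x i).val : ℤ))) *
          ∑ u : Fin n → ZMod q,
            NHT q n f u * xiq q ^ (-(∑ i, ((u i).val : ℤ) * ((x i).val : ℤ))) := by
  have hω0 : omg q ≠ 0 := Complex.exp_ne_zero _
  have hξ0 : xiq q ≠ 0 := Complex.exp_ne_zero _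
  have hqpos : (0 : ℝ) < (q : ℝ) ^ n := by
    have : 0 < q := lt_of_lt_of_le two_pos hq
    positivity
  set s : ℂ := ((Real.sqrt ((q : ℝ) ^ n) : ℝ) : ℂ) with hs
  have hs2 : s * s = (q : ℂ) ^ n := by
    rw [hs, ← Complex.ofReal_mul, Real.mul_self_sqrt (le_of_lt hqpos)]
    push_cast; ring
  have hs0 : s ≠ 0 := by
    rw [hs, Complex.ofReal_ne_zero]
    exact ne_of_gt (Real.sqrt_pos.mpr hqpos)
  -- the key orthogonality computation
  have key : ∀ y : Fin n → ZMod q,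
      ∑ u : Fin n → ZMod q,
        xiq q ^ ((∑ i, (y i).val * (u i).val : ℕ) : ℤ) *
          xiq q ^ (-(∑ i, ((u i).val : ℤ) * ((x i).val : ℤ)))
        = if y = x then ((q : ℂ)) ^ n else 0 := by
    intro y
    have step1 : ∀ u : Fin n → ZMod q,
        xiq q ^ ((∑ i, (y i).val * (u i).val : ℕ) : ℤ) *
          xiq q ^ (-(∑ i, ((u i).val : ℤ) * ((x i).val : ℤ)))
        = ∏ i, xiq q ^ ((((y i).val : ℤ) - ((x i).val : ℤ)) * ((u i).val : ℤ)) := by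
      intro u
      rw [← zpow_add₀ hξ0, ← zpow_finset_sum _ hξ0]
      congr 1
      push_cast
      rw [← sub_eq_add_neg, ← Finset.sum_sub_distrib]
      exact Finset.sum_congr rfl (fun i _ => by ring)
    rw [Finset.sum_congr rfl (fun u _ => step1 u),
      ← Fintype.prod_sum (fun (i : Fin n) (c : ZMod q) =>
          xiq q ^ ((((y i).val : ℤ) - ((x i).val : ℤ)) * (c.val : ℤ)))]
    rw [Finset.prod_congr rfl (fun i _ => orth' (y i) (x i))]
    by_cases h : y = x
    · subst h
      simp
    · obtain ⟨i, hi⟩ := Function.ne_iff.mp h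
      rw [if_neg h]
      exact Finset.prod_eq_zero (Finset.mem_univ i) (if_neg hi)
  -- rewrite the sum over u
  have h1 : ∑ u : Fin n → ZMod q,
        NHT q n f u * xiq q ^ (-(∑ i, ((u i).val : ℤ) * ((x i).val : ℤ)))
      = s⁻¹ * ∑ y : Fin n → ZMod q,
          (omg q ^ (f y).val * omg q ^ (∑ i, (y i).val)) *
            (if y = x then ((q : ℂ)) ^ n else 0) := by
    simp only [NHT, ← hs]
    have h2 : ∀ u : Fin n → ZMod q,
        (s⁻¹ * ∑ y : Fin n → ZMod q,
            omg q ^ (f y).val * xiq q ^ (∑ i, (y i).val * (u i).val) *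
              omg q ^ (∑ i, (y i).val)) *
          xiq q ^ (-(∑ i, ((u i).val : ℤ) * ((x i).val : ℤ)))
        = s⁻¹ * ∑ y : Fin n → ZMod q,
            (omg q ^ (f y).val * omg q ^ (∑ i, (y i).val)) *
              (xiq q ^ ((∑ i, (y i).val * (u i).val : ℕ) : ℤ) *
                xiq q ^ (-(∑ i, ((u i).val : ℤ) * ((x i).val : ℤ)))) := by
      intro u
      rw [mul_assoc, Finset.sum_mul]
      congr 1
      exact Finset.sum_congr rfl (fun y _ => by rw [zpow_natCast]; ring)
    rw [Finset.sum_congr rfl (fun u _ => h2 u), ← Finset.mul_sum, Finset.sum_comm]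
    congr 1
    refine Finset.sum_congr rfl (fun y _ => ?_)
    rw [← Finset.mul_sum, key y]
  rw [h1]
  simp only [mul_ite, mul_zero, Finset.sum_ite_eq', Finset.mem_univ, if_true]
  have hX : (∑ i, ((x i).val : ℤ)) = ((∑ i, (x i).val : ℕ) : ℤ) := by push_cast; rfl
  rw [hX, ← hs2, ← zpow_natCast (omg q) (∑ i, (x i).val)]
  set m := ((∑ i, (x i).val : ℕ) : ℤ)
  rw [zpow_neg]
  have hm0 : omg q ^ m ≠ 0 := zpow_ne_zero _ hω0
  field_simp
end

section
/- Let q ≥ 2 and n ≥ 1 be integers and f, g : ℤ_q^n → ℤ_{2q}. Then for every u ∈ ℤ_q^n, Σ_{z ∈ ℤ_q^n} C_{f,g}(z) ω^{−Σ_i ẑ_i} ξ^{−⟨û,ẑ⟩} = q^n N_f(u) · conj(N_g(u)). -/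
open Finset

lemma omg_ne (q : ℕ) : omg q ≠ 0 := Complex.exp_ne_zero _

lemma omg_zpow_q (q : ℕ) (hq0 : q ≠ 0) : omg q ^ (q:ℤ) = -1 := by
  rw [zpow_natCast, omg, ← Complex.exp_nat_mul]
  have h : (q:ℂ) ≠ 0 := Nat.cast_ne_zero.mpr hq0
  rw [show (q:ℂ) * ((Real.pi:ℂ) * Complex.I / q) = (Real.pi:ℂ) * Complex.I by field_simp]
  exact Complex.exp_pi_mul_I

lemma omg_zpow_2q (q : ℕ) (hq0 : q ≠ 0) : omg q ^ ((2*q:ℕ):ℤ) = 1 := by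
  have : ((2*q:ℕ):ℤ) = (q:ℤ) * 2 := by push_cast; ring
  rw [this, zpow_mul, omg_zpow_q q hq0]
  norm_num

lemma xiq_eq (q : ℕ) : xiq q = omg q ^ (2:ℤ) := by
  rw [xiq, omg, show (2:ℤ) = ((2:ℕ):ℤ) by norm_num, zpow_natCast, ← Complex.exp_nat_mul]
  congr 1
  push_cast
  ring

lemma conj_omg (q : ℕ) : (starRingEnd ℂ) (omg q) = (omg q)⁻¹ := by
  rw [omg, ← Complex.exp_conj, ← Complex.exp_neg]
  congr 1
  simp [map_div₀, Complex.conj_I]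
  ring

lemma conj_xiq (q : ℕ) : (starRingEnd ℂ) (xiq q) = (xiq q)⁻¹ := by
  rw [xiq, ← Complex.exp_conj, ← Complex.exp_neg]
  congr 1
  simp [map_div₀, Complex.conj_I, map_ofNat]
  ring

lemma zpow_congr {w : ℂ} (hw : w ≠ 0) {m : ℕ} (h1 : w ^ ((m:ℕ):ℤ) = 1) {a b : ℤ}
    (h : ((m:ℕ):ℤ) ∣ a - b) : w ^ a = w ^ b := by
  obtain ⟨k, hk⟩ := h
  have ha : a = b + (m:ℤ) * k := by linarith
  rw [ha, zpow_add₀ hw, zpow_mul, h1, one_zpow, mul_one]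

lemma coord (q : ℕ) [NeZero q] (a z : ZMod q) :
    ((a + z).val : ℤ) = (a.val:ℤ) + (z.val:ℤ) - q * (if q ≤ a.val + z.val then 1 else 0) := by
  have h := ZMod.val_add a z
  have ha := ZMod.val_lt a
  have hz := ZMod.val_lt z
  rw [h]
  split_ifs with hle
  · have h2 : (a.val + z.val) % q = a.val + z.val - q := by
      rw [Nat.mod_eq_sub_mod hle, Nat.mod_eq_of_lt (by omega)]
    omega
  · have h2 : (a.val + z.val) % q = a.val + z.val := Nat.mod_eq_of_lt (by omega)
    omega

lemma valsub (m : ℕ) [NeZero m] (a b : ZMod m) :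
    ((m:ℕ):ℤ) ∣ ((a-b).val:ℤ) - ((a.val:ℤ) - (b.val:ℤ)) := by
  rw [← ZMod.intCast_zmod_eq_zero_iff_dvd]
  push_cast
  simp [ZMod.natCast_val, ZMod.cast_id]

lemma inv_pow_eq {w : ℂ} (k : ℕ) : (w⁻¹) ^ k = w ^ (-(k:ℤ)) := by
  rw [inv_pow, ← zpow_natCast, ← zpow_neg]

lemma term_eq (q : ℕ) [NeZero q] {n : ℕ}
    (f g : (Fin n → ZMod q) → ZMod (2 * q)) (u x y : Fin n → ZMod q) :
    omg q ^ (f x - g y).val *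
        (-1 : ℂ) ^ (Finset.univ.filter (fun i => q ≤ (x i).val + ((y - x) i).val)).card *
        omg q ^ (-(∑ i, (((y - x) i).val : ℤ))) *
        xiq q ^ (-(∑ i, ((u i).val : ℤ) * (((y - x) i).val : ℤ)))
      = (omg q ^ (f x).val * xiq q ^ (∑ i, (x i).val * (u i).val) * omg q ^ (∑ i, (x i).val)) *
        (omg q ^ (-(((g y).val : ℕ):ℤ)) * xiq q ^ (-((∑ i, (y i).val * (u i).val : ℕ):ℤ)) *
          omg q ^ (-((∑ i, (y i).val : ℕ):ℤ))) := by
  have hq0 : q ≠ 0 := NeZero.ne q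
  haveI : NeZero (2*q) := ⟨by omega⟩
  have hω : omg q ≠ 0 := omg_ne q
  rw [show ((-1:ℂ)) = omg q ^ (q:ℤ) from (omg_zpow_q q hq0).symm]
  simp only [xiq_eq, ← zpow_natCast, ← zpow_mul, ← zpow_add₀ hω]
  apply zpow_congr hω (omg_zpow_2q q hq0)
  have hy : ∀ i, ((y i).val:ℤ) = ((x i).val:ℤ) + (((y - x) i).val:ℤ)
      - q * (if q ≤ (x i).val + ((y - x) i).val then 1 else 0) := by
    intro i
    have := coord q (x i) (y i - x i)
    simpa using this
  have hS5 : (∑ i, ((y i).val:ℤ)) = (∑ i, ((x i).val:ℤ)) + (∑ i, (((y - x) i).val:ℤ))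
      - q * (∑ i, (if q ≤ (x i).val + ((y - x) i).val then (1:ℤ) else 0)) := by
    rw [Finset.mul_sum, ← Finset.sum_add_distrib, ← Finset.sum_sub_distrib]
    exact Finset.sum_congr rfl (fun i _ => hy i)
  have hS6 : (∑ i, ((y i).val:ℤ) * ((u i).val:ℤ))
      = (∑ i, ((x i).val:ℤ) * ((u i).val:ℤ)) + (∑ i, (((y - x) i).val:ℤ) * ((u i).val:ℤ))
      - q * (∑ i, (if q ≤ (x i).val + ((y - x) i).val then (1:ℤ) else 0) * ((u i).val:ℤ)) := by
    rw [Finset.mul_sum, ← Finset.sum_add_distrib, ← Finset.sum_sub_distrib]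
    refine Finset.sum_congr rfl (fun i _ => ?_)
    rw [hy i]; ring
  have hcnt : (((Finset.univ.filter (fun i => q ≤ (x i).val + ((y - x) i).val)).card : ℕ):ℤ)
      = ∑ i, (if q ≤ (x i).val + ((y - x) i).val then (1:ℤ) else 0) := by
    rw [Finset.card_filter]
    push_cast
    rfl
  obtain ⟨d, hd⟩ := valsub (2*q) (f x) (g y)
  refine ⟨d - (∑ i, (if q ≤ (x i).val + ((y - x) i).val then (1:ℤ) else 0) * ((u i).val:ℤ)), ?_⟩
  push_cast at hd ⊢
  rw [hcnt]
  have hcomm : (∑ i, ((u i).val:ℤ) * (((y - x) i).val:ℤ))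
      = ∑ i, (((y - x) i).val:ℤ) * ((u i).val:ℤ) :=
    Finset.sum_congr rfl (fun i _ => mul_comm _ _)
  linear_combination hd + hS5 + 2 * hS6 - 2 * hcomm

/-- For all `u ∈ ℤ_q^n`,
`Σ_z C_{f,g}(z) ω^{−Σ_i ẑ_i} ξ^{−⟨û,ẑ⟩} = q^n N_f(u) · conj(N_g(u))`. -/
theorem negaCC_sum_eq (q n : ℕ) [NeZero q] (hq : 2 ≤ q) (hn : 1 ≤ n)
    (f g : (Fin n → ZMod q) → ZMod (2 * q)) (u : Fin n → ZMod q) :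
    ∑ z : Fin n → ZMod q,
        negaCC q n f g z * omg q ^ (-(∑ i, ((z i).val : ℤ))) *
          xiq q ^ (-(∑ i, ((u i).val : ℤ) * ((z i).val : ℤ)))
      = (q : ℂ) ^ n * NHT q n f u * (starRingEnd ℂ) (NHT q n g u) := by
  have hq0 : q ≠ 0 := by omega
  have hω : omg q ≠ 0 := omg_ne q
  have hqpos : (0:ℝ) < (q:ℝ) := by exact_mod_cast Nat.pos_of_ne_zero hq0
  rw [NHT, NHT, map_mul, map_inv₀, Complex.conj_ofReal]
  rw [show ∀ A B : ℂ, (q:ℂ)^n * (((Real.sqrt ((q:ℝ)^n) : ℝ):ℂ)⁻¹ * A) *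
      (((Real.sqrt ((q:ℝ)^n) : ℝ):ℂ)⁻¹ * B)
      = ((q:ℂ)^n * (((Real.sqrt ((q:ℝ)^n) : ℝ):ℂ) * ((Real.sqrt ((q:ℝ)^n) : ℝ):ℂ))⁻¹) * (A * B)
    from fun A B => by ring]
  have hcsq : (((Real.sqrt ((q:ℝ)^n) : ℝ):ℂ) * ((Real.sqrt ((q:ℝ)^n) : ℝ):ℂ)) = (q:ℂ)^n := by
    rw [← Complex.ofReal_mul, Real.mul_self_sqrt (le_of_lt (pow_pos hqpos n))]
    push_cast
    ring
  rw [hcsq, mul_inv_cancel₀ (pow_ne_zero n (Nat.cast_ne_zero.mpr hq0)), one_mul]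
  rw [map_sum]
  simp only [map_mul, map_pow, conj_omg, conj_xiq, inv_pow_eq]
  rw [Finset.sum_mul_sum]
  simp only [negaCC, Finset.sum_mul]
  rw [Finset.sum_comm]
  refine Finset.sum_congr rfl (fun x _ => ?_)
  refine Fintype.sum_equiv (Equiv.addRight x) _ _ (fun z => ?_)
  have h := term_eq q f g u x (z + x)
  simp only [add_sub_cancel_right] at h
  rw [show x + z = z + x from add_comm x z]
  exact h
end

section
/- Let q ≥ 2 and n ≥ 1 be integers and f : ℤ_q^n → ℤ_{2q}. Then f is 2q-negabent if and only if C_f(u) = 0 for all u ∈ ℤ_q^n with u ≠ 0. -/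
open Finset

/-!
Put `g(x) = ω^{f(x) + Σ_i x̂_i}`, a unimodular function on `ℤ_q^n`. The characters of `ℤ_q^n` are
`x ↦ ξ^{⟨x̂,û⟩}`, and `N_f = q^{-n/2} ĝ` for the Fourier transform `ĝ` of `g`. Since
`x̂_i + û_i = (x + u)^_i + q [x̂_i + û_i ≥ q]` and `ω^q = -1`, the autocorrelation
`Σ_x g(x) conj (g(x + u))` equals `ω^{-Σ û_i} C_f(u)`. By Wiener–Khinchin, `|ĝ|²` is the Fourier
transform of `q^n` times the autocorrelation, whose value at `0` is `q^n`; so `|ĝ|² ≡ q^n` iff the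
autocorrelation vanishes off `0`.
-/

open ComplexConjugate

lemma AddChar.map_sum_eq_prod {A M ι : Type*} [AddCommMonoid A] [CommMonoid M] (ψ : AddChar A M)
    (s : Finset ι) (a : ι → A) : ψ (∑ i ∈ s, a i) = ∏ i ∈ s, ψ (a i) := by
  classical
  induction s using Finset.induction_on with
  | empty => simp
  | insert i s hi ih => rw [sum_insert hi, prod_insert hi, map_add_eq_mul, ih]

noncomputable def fourierDot {R ι : Type*} [CommRing R] [Fintype R] [Fintype ι] [DecidableEq ι]
    (ψ : AddChar R ℂ) (g : (ι → R) → ℂ) (u : ι → R) : ℂ :=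
  ∑ x, g x * ψ (x ⬝ᵥ u)

noncomputable def autocorr {G : Type*} [AddCommGroup G] [Fintype G] (g : G → ℂ) (v : G) : ℂ :=
  ∑ x, g x * conj (g (x + v))

section Fourier

variable {R ι : Type*} [CommRing R] [Fintype R] [DecidableEq R] [Fintype ι] [DecidableEq ι]
  {ψ : AddChar R ℂ}

lemma AddChar.sum_apply_dotProduct (hψ : ψ.IsPrimitive) (v : ι → R) :
    ∑ u, ψ (u ⬝ᵥ v) = if v = 0 then (Fintype.card (ι → R) : ℂ) else 0 := by
  simp only [dotProduct, AddChar.map_sum_eq_prod]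
  rw [← Fintype.prod_sum fun i c ↦ ψ (c * v i)]
  simp only [AddChar.sum_mulShift _ hψ, apply_ite Nat.cast, Nat.cast_zero, prod_ite_zero,
    prod_const, card_univ, Fintype.card_fun, Nat.cast_pow, funext_iff, Pi.zero_apply, mem_univ,
    forall_const]

lemma fourierDot_inversion (hψ : ψ.IsPrimitive) (h : (ι → R) → ℂ) (w : ι → R) :
    ∑ v, fourierDot ψ h v * ψ (-(v ⬝ᵥ w)) = Fintype.card (ι → R) * h w := by
  have hchar (u v : ι → R) : ψ (u ⬝ᵥ v) * ψ (-(v ⬝ᵥ w)) = ψ (v ⬝ᵥ (u - w)) := by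
    rw [← AddChar.map_add_eq_mul, dotProduct_sub, dotProduct_comm u, sub_eq_add_neg]
  simp_rw [fourierDot, sum_mul, mul_assoc, hchar]
  rw [sum_comm]
  simp_rw [← mul_sum, AddChar.sum_apply_dotProduct hψ, sub_eq_zero, mul_ite, mul_zero]
  rw [sum_ite_eq' univ w, if_pos (mem_univ _), mul_comm]

lemma fourierDot_norm_sq (hψ : ψ.IsPrimitive) (g : (ι → R) → ℂ) (v : ι → R) :
    fourierDot ψ (fun u ↦ (‖fourierDot ψ g u‖ : ℂ) ^ 2) v
      = Fintype.card (ι → R) * autocorr g v := by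
  have hchar (u x y : ι → R) :
      ψ (x ⬝ᵥ u) * conj (ψ (y ⬝ᵥ u)) * ψ (u ⬝ᵥ v) = ψ (u ⬝ᵥ (x - y + v)) := by
    rw [← AddChar.map_neg_eq_conj, ← AddChar.map_add_eq_mul, ← AddChar.map_add_eq_mul,
      dotProduct_add, dotProduct_sub, dotProduct_comm u x, dotProduct_comm u y, sub_eq_add_neg]
  calc fourierDot ψ (fun u ↦ (‖fourierDot ψ g u‖ : ℂ) ^ 2) v
      = ∑ u, ∑ x, ∑ y, g x * conj (g y) * ψ (u ⬝ᵥ (x - y + v)) := by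
        refine sum_congr rfl fun u _ ↦ ?_
        dsimp only
        rw [← Complex.mul_conj', fourierDot, map_sum, sum_mul_sum, sum_mul]
        refine sum_congr rfl fun x _ ↦ ?_
        rw [sum_mul]
        refine sum_congr rfl fun y _ ↦ ?_
        rw [map_mul, ← hchar]
        ring
    _ = ∑ x, ∑ y, g x * conj (g y) * ∑ u, ψ (u ⬝ᵥ (x - y + v)) := by
        rw [sum_comm]
        simp_rw [mul_sum]
        exact sum_congr rfl fun x _ ↦ sum_comm
    _ = Fintype.card (ι → R) * autocorr g v := by
        simp_rw [AddChar.sum_apply_dotProduct hψ, sub_add_eq_add_sub, sub_eq_zero, mul_ite,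
          mul_zero, sum_ite_eq, mem_univ, if_true, autocorr, mul_sum, mul_comm]

theorem norm_fourierDot_sq_eq_card_iff (hψ : ψ.IsPrimitive) {g : (ι → R) → ℂ}
    (hg : ∀ x, ‖g x‖ = 1) :
    (∀ u, ‖fourierDot ψ g u‖ ^ 2 = Fintype.card (ι → R)) ↔ ∀ v ≠ 0, autocorr g v = 0 := by
  have hN : (Fintype.card (ι → R) : ℂ) ≠ 0 := Nat.cast_ne_zero.2 Fintype.card_ne_zero
  have hflat : (∀ u, ‖fourierDot ψ g u‖ ^ 2 = Fintype.card (ι → R)) ↔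
      ∀ u, (‖fourierDot ψ g u‖ : ℂ) ^ 2 = Fintype.card (ι → R) :=
    forall_congr' fun u ↦ by norm_cast
  rw [hflat]
  constructor
  · intro H v hv
    have hwk := fourierDot_norm_sq hψ g v
    rw [fourierDot] at hwk
    simp only [H, ← mul_sum, AddChar.sum_apply_dotProduct hψ, if_neg hv, mul_zero] at hwk
    exact (mul_eq_zero.1 hwk.symm).resolve_left hN
  · intro H w
    have h0 : autocorr g 0 = Fintype.card (ι → R) := by
      simp_rw [autocorr, add_zero, Complex.mul_conj', hg]
      simp
    have hinv := fourierDot_inversion hψ (fun u ↦ (‖fourierDot ψ g u‖ : ℂ) ^ 2) w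
    rw [Fintype.sum_eq_single 0 fun v hv ↦ by
        rw [fourierDot_norm_sq hψ, H v hv, mul_zero, zero_mul],
      fourierDot_norm_sq hψ, h0, zero_dotProduct, neg_zero, AddChar.map_zero_eq_one,
      mul_one] at hinv
    exact (mul_left_cancel₀ hN hinv).symm

end Fourier

lemma norm_inv_sqrt_mul_eq_one_iff {c : ℝ} (hc : 0 < c) (z : ℂ) :
    ‖(Real.sqrt c : ℂ)⁻¹ * z‖ = 1 ↔ ‖z‖ ^ 2 = c := by
  rw [norm_mul, norm_inv, Complex.norm_real, Real.norm_of_nonneg (Real.sqrt_nonneg c),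
    inv_mul_eq_one₀ (Real.sqrt_ne_zero'.2 hc), Real.sqrt_eq_iff_eq_sq hc.le (norm_nonneg z),
    eq_comm]

/-- The paper's `Σ_i x̂_i`, read in `ℤ_{2q}`. -/
def hatSum {q : ℕ} {ι : Type*} [Fintype ι] (x : ι → ZMod q) : ZMod (2 * q) :=
  ∑ i, ((x i).val : ZMod (2 * q))

section Nega

variable {q n : ℕ} [NeZero q]

lemma omg_pow (m : ℕ) : omg q ^ m = ZMod.stdAddChar (m : ZMod (2 * q)) := by
  have := ZMod.stdAddChar_coe (N := 2 * q) m
  rw [Int.cast_natCast] at this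
  rw [this, omg, ← Complex.exp_nat_mul]
  congr 1
  push_cast
  field_simp

lemma xiq_pow (m : ℕ) : xiq q ^ m = ZMod.stdAddChar (m : ZMod q) := by
  have := ZMod.stdAddChar_coe (N := q) m
  rw [Int.cast_natCast] at this
  rw [this, xiq, ← Complex.exp_nat_mul]
  congr 1
  push_cast
  field_simp

lemma stdAddChar_natCast_eq_neg_one : ZMod.stdAddChar (q : ZMod (2 * q)) = -1 := by
  have := ZMod.stdAddChar_coe (N := 2 * q) q
  have hq : (q : ℂ) ≠ 0 := Nat.cast_ne_zero.2 (NeZero.ne q)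
  rw [Int.cast_natCast] at this
  rw [this, ← Complex.exp_pi_mul_I]
  congr 1
  push_cast
  field_simp

lemma ZMod.val_add_val_eq_val_add_ite (a b : ZMod q) :
    a.val + b.val = (a + b).val + if q ≤ a.val + b.val then q else 0 := by
  split_ifs with h
  · exact ZMod.val_add_val_of_le h
  · rw [ZMod.val_add_of_lt (not_le.1 h), add_zero]

lemma hatSum_add_hatSum {ι : Type*} [Fintype ι] (x v : ι → ZMod q) :
    hatSum x + hatSum v
      = hatSum (x + v) + #{i | q ≤ (x i).val + (v i).val} • (q : ZMod (2 * q)) := by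
  simp only [hatSum, ← sum_add_distrib, ← Nat.cast_add]
  rw [sum_congr rfl fun i _ ↦ congrArg Nat.cast (ZMod.val_add_val_eq_val_add_ite (x i) (v i))]
  simp only [Nat.cast_add, sum_add_distrib, Pi.add_apply, Nat.cast_ite, Nat.cast_zero,
    ← sum_filter, sum_const]

/-- `x ↦ ω^{f(x) + Σ_i x̂_i}`. -/
noncomputable def negaTwist (f : (Fin n → ZMod q) → ZMod (2 * q)) (x : Fin n → ZMod q) : ℂ :=
  ZMod.stdAddChar (f x + hatSum x)

lemma NHT_eq_fourierDot (f : (Fin n → ZMod q) → ZMod (2 * q)) (u : Fin n → ZMod q) :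
    NHT q n f u
      = (Real.sqrt ((q : ℝ) ^ n) : ℂ)⁻¹ * fourierDot ZMod.stdAddChar (negaTwist f) u := by
  rw [NHT, fourierDot]
  congr 1
  refine sum_congr rfl fun x _ ↦ ?_
  simp only [omg_pow, xiq_pow, negaTwist, AddChar.map_add_eq_mul, Nat.cast_sum, Nat.cast_mul,
    ZMod.natCast_zmod_val, hatSum, dotProduct]
  ring

lemma autocorr_negaTwist (f : (Fin n → ZMod q) → ZMod (2 * q)) (v : Fin n → ZMod q) :
    autocorr (negaTwist f) v = ZMod.stdAddChar (-hatSum v) * negaCC q n f f v := by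
  rw [autocorr, negaCC, mul_sum]
  refine sum_congr rfl fun x _ ↦ ?_
  rw [negaTwist, negaTwist, ← AddChar.map_neg_eq_conj, omg_pow,
    ZMod.natCast_zmod_val (f x - f (x + v)), ← stdAddChar_natCast_eq_neg_one (q := q),
    ← AddChar.map_nsmul_eq_pow, ← AddChar.map_add_eq_mul, ← AddChar.map_add_eq_mul,
    ← AddChar.map_add_eq_mul]
  congr 1
  linear_combination hatSum_add_hatSum x v

end Nega

theorem negabent_iff_negaAC_general (q n : ℕ) [NeZero q]
    (f : (Fin n → ZMod q) → ZMod (2 * q)) :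
    (∀ u : Fin n → ZMod q, ‖NHT q n f u‖ = 1) ↔
      (∀ u : Fin n → ZMod q, u ≠ 0 → negaCC q n f f u = 0) := by
  have hcard : (Fintype.card (Fin n → ZMod q) : ℝ) = (q : ℝ) ^ n := by simp
  have hbent (u : Fin n → ZMod q) :
      ‖NHT q n f u‖ = 1 ↔ ‖fourierDot ZMod.stdAddChar (negaTwist f) u‖ ^ 2 = (q : ℝ) ^ n := by
    rw [NHT_eq_fourierDot,
      norm_inv_sqrt_mul_eq_one_iff (pow_pos (Nat.cast_pos.2 (NeZero.pos q)) n)]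
  have hAC (v : Fin n → ZMod q) : autocorr (negaTwist f) v = 0 ↔ negaCC q n f f v = 0 := by
    have hunit : ZMod.stdAddChar (-hatSum v) ≠ 0 := fun h ↦ by
      simpa [h] using AddChar.norm_apply ZMod.stdAddChar (-hatSum v)
    rw [autocorr_negaTwist, mul_eq_zero, or_iff_right hunit]
  simp_rw [hbent, ← hcard]
  rw [norm_fourierDot_sq_eq_card_iff (g := negaTwist f) (ZMod.isPrimitive_stdAddChar q)
    fun _ ↦ AddChar.norm_apply _ _]
  simp_rw [hAC]

/-- `f` is `2q`-negabent (`|N_f(u)| = 1` for all `u`) iff its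
`2q`-nega-autocorrelation vanishes at every nonzero `u`. -/
theorem negabent_iff_negaAC (q n : ℕ) [NeZero q] (hq : 2 ≤ q) (hn : 1 ≤ n)
    (f : (Fin n → ZMod q) → ZMod (2 * q)) :
    (∀ u : Fin n → ZMod q, ‖NHT q n f u‖ = 1) ↔
      (∀ u : Fin n → ZMod q, u ≠ 0 → negaCC q n f f u = 0) :=
  negabent_iff_negaAC_general q n f
end

section
/- Let q ≥ 2, n ≥ 1, and 1 ≤ r ≤ n be integers, and let f : ℤ_q^n → ℤ_{2q}. For v ∈ ℤ_q^r, let f_v : ℤ_q^{n−r} → ℤ_{2q} denote the restriction f_v(z) = f(vz), where vz is the concatenation of v and z. Then for all u ∈ ℤ_q^r and w ∈ ℤ_q^{n−r}, the 2q-nega-autocorrelation satisfies C_f(uw) = Σ_{v ∈ ℤ_q^r} C_{f_v, f_{v+u}}(w) · (−1)^{n_q(û,v̂)}. -/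
open Finset

lemma fin_append_eq_elim {r s : ℕ} {α : Type*} (v : Fin r → α) (z : Fin s → α) (i : Fin (r + s)) :
    Fin.append v z i = Sum.elim v z (finSumFinEquiv.symm i) := by
  cases i using Fin.addCases with
  | left j => simp [Fin.append_left]
  | right j => simp [Fin.append_right]

lemma fin_append_add {r s : ℕ} {α : Type*} [Add α] (a c : Fin r → α) (b d : Fin s → α) :
    Fin.append a b + Fin.append c d = Fin.append (a + c) (b + d) := by
  funext i
  cases i using Fin.addCases with
  | left j => simp [Fin.append_left]
  | right j => simp [Fin.append_right]

/-- For `f : ℤ_q^{r+s} → ℤ_{2q}` and the restrictions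
`f_v(z) = f(vz)` (concatenation), the `2q`-nega-autocorrelation satisfies
`C_f(uw) = Σ_{v ∈ ℤ_q^r} C_{f_v, f_{v+u}}(w) · (−1)^{n_q(û,v̂)}`. -/
theorem negaAC_concat (q r s : ℕ) [NeZero q] (hq : 2 ≤ q) (hr : 1 ≤ r)
    (f : (Fin (r + s) → ZMod q) → ZMod (2 * q))
    (u : Fin r → ZMod q) (w : Fin s → ZMod q) :
    negaCC q (r + s) f f (Fin.append u w)
      = ∑ v : Fin r → ZMod q,
          negaCC q s (fun z => f (Fin.append v z)) (fun z => f (Fin.append (v + u) z)) w *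
            (-1 : ℂ) ^ (Finset.univ.filter (fun i => q ≤ (u i).val + (v i).val)).card := by
  classical
  have reidx : ∀ F : (Fin (r + s) → ZMod q) → ℂ,
      ∑ x, F x = ∑ v : Fin r → ZMod q, ∑ z : Fin s → ZMod q, F (Fin.append v z) := by
    intro F
    rw [← Fintype.sum_prod_type']
    exact (Fintype.sum_equiv
      ((Equiv.sumArrowEquivProdArrow (Fin r) (Fin s) (ZMod q)).symm.trans
        (Equiv.arrowCongr finSumFinEquiv (Equiv.refl (ZMod q))))
      (fun p => F (Fin.append p.1 p.2)) F
      (fun p => by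
        refine congrArg F (funext fun i => ?_)
        simp [fin_append_eq_elim, Equiv.arrowCongr, Equiv.sumArrowEquivProdArrow])).symm
  have key : ∀ (v : Fin r → ZMod q) (z : Fin s → ZMod q),
      (Finset.univ.filter (fun i : Fin (r + s) =>
          q ≤ ((Fin.append v z) i).val + ((Fin.append u w) i).val)).card
        = (Finset.univ.filter (fun i : Fin s => q ≤ (z i).val + (w i).val)).card
          + (Finset.univ.filter (fun i : Fin r => q ≤ (u i).val + (v i).val)).card := by
    intro v z
    simp only [Finset.card_filter]
    rw [Fin.sum_univ_add]
    simp only [Fin.append_left, Fin.append_right]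
    rw [add_comm]
    congr 1
    exact Finset.sum_congr rfl fun i _ => by rw [add_comm ((v i).val)]
  unfold negaCC
  rw [reidx]
  refine Finset.sum_congr rfl fun v _ => ?_
  rw [Finset.sum_mul]
  refine Finset.sum_congr rfl fun z _ => ?_
  rw [fin_append_add, key, pow_add, mul_assoc]
end

section
/- Let q ≥ 2, r ≥ 1, and s ≥ 1 be integers. If f₁ : ℤ_q^r → ℤ_{2q} and f₂ : ℤ_q^s → ℤ_{2q} are 2q-negabent, then their direct sum f : ℤ_q^{r+s} → ℤ_{2q}, defined by f(x, y) = f₁(x) + f₂(y) for x ∈ ℤ_q^r, y ∈ ℤ_q^s (addition in ℤ_{2q}), is 2q-negabent. -/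
open Finset

/- Writing `x ∈ ℤ_q^{r+s}` as `(a, b)`, the summand of `N_f(u)` is the product of the summands of
`N_{f₁}(u₁)` and `N_{f₂}(u₂)`: since `ω^{2q} = 1`, `ω^{f₁(a)+f₂(b)} = ω^{f₁(a)} ω^{f₂(b)}` despite
the reduction mod `2q`, and the other exponents are sums over coordinates. With
`q^{-(r+s)/2} = q^{-r/2} q^{-s/2}` this gives `N_f(u) = N_{f₁}(u₁) N_{f₂}(u₂)`; norms multiply. -/

theorem Fin.sum_pi_add_eq_sum_sum_append {α M : Type*} [Fintype α] [AddCommMonoid M] (m n : ℕ)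
    (F : (Fin (m + n) → α) → M) :
    ∑ x, F x = ∑ a : Fin m → α, ∑ b : Fin n → α, F (Fin.append a b) := by
  rw [← (Fin.appendEquiv m n).sum_comp, Fintype.sum_prod_type]
  rfl

lemma omg_pow_two_mul_self (q : ℕ) [NeZero q] : omg q ^ (2 * q) = 1 := by
  have hq : (q : ℂ) ≠ 0 := Nat.cast_ne_zero.mpr (NeZero.ne q)
  rw [omg, ← Complex.exp_nat_mul, ← Complex.exp_two_pi_mul_I]
  congr 1
  push_cast
  field_simp

lemma omg_pow_val_add (q : ℕ) [NeZero q] (a b : ZMod (2 * q)) :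
    omg q ^ (a + b).val = omg q ^ a.val * omg q ^ b.val := by
  rw [ZMod.val_add, ← pow_eq_pow_mod _ (omg_pow_two_mul_self q), pow_add]

lemma sqrt_pow_add {x : ℝ} (hx : 0 ≤ x) (m n : ℕ) :
    Real.sqrt (x ^ (m + n)) = Real.sqrt (x ^ m) * Real.sqrt (x ^ n) := by
  rw [pow_add, Real.sqrt_mul (pow_nonneg hx m)]

section DirectSum

variable {q n r s : ℕ}

noncomputable def nhtTerm (f : (Fin n → ZMod q) → ZMod (2 * q)) (u x : Fin n → ZMod q) : ℂ :=
  omg q ^ (f x).val * xiq q ^ (∑ i, (x i).val * (u i).val) * omg q ^ (∑ i, (x i).val)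

lemma NHT_eq_sum_nhtTerm [NeZero q] (f : (Fin n → ZMod q) → ZMod (2 * q)) (u : Fin n → ZMod q) :
    NHT q n f u = (Real.sqrt ((q : ℝ) ^ n) : ℂ)⁻¹ * ∑ x, nhtTerm f u x :=
  rfl

def directSum (f₁ : (Fin r → ZMod q) → ZMod (2 * q)) (f₂ : (Fin s → ZMod q) → ZMod (2 * q))
    (x : Fin (r + s) → ZMod q) : ZMod (2 * q) :=
  f₁ (fun i => x (Fin.castAdd s i)) + f₂ (fun j => x (Fin.natAdd r j))

lemma nhtTerm_directSum_append [NeZero q] (f₁ : (Fin r → ZMod q) → ZMod (2 * q))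
    (f₂ : (Fin s → ZMod q) → ZMod (2 * q)) (u : Fin (r + s) → ZMod q)
    (a : Fin r → ZMod q) (b : Fin s → ZMod q) :
    nhtTerm (directSum f₁ f₂) u (Fin.append a b) =
      nhtTerm f₁ (fun i => u (Fin.castAdd s i)) a * nhtTerm f₂ (fun j => u (Fin.natAdd r j)) b := by
  simp only [nhtTerm, directSum, Fin.sum_univ_add, Fin.append_left, Fin.append_right,
    omg_pow_val_add, pow_add]
  ring

lemma NHT_directSum [NeZero q] (f₁ : (Fin r → ZMod q) → ZMod (2 * q))
    (f₂ : (Fin s → ZMod q) → ZMod (2 * q)) (u : Fin (r + s) → ZMod q) :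
    NHT q (r + s) (directSum f₁ f₂) u =
      NHT q r f₁ (fun i => u (Fin.castAdd s i)) * NHT q s f₂ (fun j => u (Fin.natAdd r j)) := by
  simp only [NHT_eq_sum_nhtTerm, Fin.sum_pi_add_eq_sum_sum_append, nhtTerm_directSum_append,
    sqrt_pow_add (Nat.cast_nonneg q), Complex.ofReal_mul, mul_inv]
  rw [← Finset.sum_mul_sum]
  ring

end DirectSum

theorem directSum_negabent_general (q r s : ℕ) [NeZero q]
    (f₁ : (Fin r → ZMod q) → ZMod (2 * q)) (f₂ : (Fin s → ZMod q) → ZMod (2 * q))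
    (h₁ : ∀ u : Fin r → ZMod q, ‖NHT q r f₁ u‖ = 1)
    (h₂ : ∀ u : Fin s → ZMod q, ‖NHT q s f₂ u‖ = 1) :
    ∀ u : Fin (r + s) → ZMod q,
      ‖NHT q (r + s)
        (fun x => f₁ (fun i => x (Fin.castAdd s i)) + f₂ (fun j => x (Fin.natAdd r j))) u‖ = 1 := by
  intro u
  calc _ = ‖NHT q r f₁ _ * NHT q s f₂ _‖ := congrArg norm (NHT_directSum f₁ f₂ u)
    _ = 1 := by rw [norm_mul, h₁, h₂, mul_one]

/-- The direct sum `f(x,y) = f₁(x) + f₂(y)` of two `2q`-negabent functions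
`f₁ : ℤ_q^r → ℤ_{2q}` and `f₂ : ℤ_q^s → ℤ_{2q}` is `2q`-negabent. -/
theorem directSum_negabent (q r s : ℕ) [NeZero q] (hq : 2 ≤ q) (hr : 1 ≤ r) (hs : 1 ≤ s)
    (f₁ : (Fin r → ZMod q) → ZMod (2 * q)) (f₂ : (Fin s → ZMod q) → ZMod (2 * q))
    (h₁ : ∀ u : Fin r → ZMod q, ‖NHT q r f₁ u‖ = 1)
    (h₂ : ∀ u : Fin s → ZMod q, ‖NHT q s f₂ u‖ = 1) :
    ∀ u : Fin (r + s) → ZMod q,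
      ‖NHT q (r + s)
        (fun x => f₁ (fun i => x (Fin.castAdd s i)) + f₂ (fun j => x (Fin.natAdd r j))) u‖ = 1 :=
  directSum_negabent_general q r s f₁ f₂ h₁ h₂
end
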